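/- arXiv:1508.07399 — 5 statements merged into one kernel-verified Lean document; each statement's English description precedes it below -/
import Mathlib

section
/- Let φ, ψ ∈ 𝒯 with lim_{x→∞} φ(x) = lim_{x→∞} ψ(x) = +∞ and let K > 0. Set L := max{φ⁻¹(K), ψ⁻¹(K)} and, for f ∈ 𝒯, f_K := min{f, K} (pointwise truncation at level K). Then ρ_K(φ⁻¹, ψ⁻¹) ≤ ρ_L(φ_K, ψ_K). -/
open Set Filter

/-- The right-continuous inverse of `φ`: `φ⁻¹(x) = inf {y ≥ 0 : φ(y) > x}`. -/
noncomputable def rcInv (φ : ℝ → ℝ) (x : ℝ) : ℝ :=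
  sInf {y : ℝ | 0 ≤ y ∧ x < φ y}

/-- The modified Lévy distance up to level `K`:
`ρ_K(φ,ψ) = inf {ε > 0 : φ(x−ε) − ε < ψ(x) and ψ(x−ε) − ε < φ(x) for all x ∈ [0,K]}`. -/
noncomputable def rho (K : ℝ) (φ ψ : ℝ → ℝ) : ℝ :=
  sInf {ε : ℝ | 0 < ε ∧ ∀ x ∈ Icc (0:ℝ) K, φ (x - ε) - ε < ψ x ∧ ψ (x - ε) - ε < φ x}

lemma rcSet_bddBelow (φ : ℝ → ℝ) (x : ℝ) : BddBelow {y : ℝ | 0 ≤ y ∧ x < φ y} :=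
  ⟨0, fun _ hy => hy.1⟩

lemma rcSet_nonempty (φ : ℝ → ℝ) (hφlim : Tendsto φ atTop atTop) (x : ℝ) :
    {y : ℝ | 0 ≤ y ∧ x < φ y}.Nonempty := by
  obtain ⟨y, hy1, hy2⟩ := ((eventually_ge_atTop (0:ℝ)).and (hφlim.eventually_gt_atTop x)).exists
  exact ⟨y, hy1, hy2⟩

lemma rcInv_nonneg (φ : ℝ → ℝ) (hφlim : Tendsto φ atTop atTop) (x : ℝ) :
    0 ≤ rcInv φ x :=
  le_csInf (rcSet_nonempty φ hφlim x) fun _ hy => hy.1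

lemma rcInv_le (φ : ℝ → ℝ) {x y : ℝ} (hy : 0 ≤ y) (hxy : x < φ y) :
    rcInv φ x ≤ y :=
  csInf_le (rcSet_bddBelow φ x) ⟨hy, hxy⟩

lemma rcInv_mono (φ : ℝ → ℝ) (hφlim : Tendsto φ atTop atTop) {x x' : ℝ} (h : x ≤ x') :
    rcInv φ x ≤ rcInv φ x' :=
  csInf_le_csInf (rcSet_bddBelow φ x) (rcSet_nonempty φ hφlim x')
    (fun y hy => ⟨hy.1, h.trans_lt hy.2⟩)

lemma le_apply_rcInv (φ : ℝ → ℝ) (hφmono : Monotone φ)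
    (hφrc : ∀ x, ContinuousWithinAt φ (Ici x) x) (hφlim : Tendsto φ atTop atTop) (x : ℝ) :
    x ≤ φ (rcInv φ x) := by
  set a := rcInv φ x with ha
  have h : ∀ y, a < y → x < φ y := by
    intro y hy
    obtain ⟨z, hz, hzy⟩ := (csInf_lt_iff (rcSet_bddBelow φ x) (rcSet_nonempty φ hφlim x)).1 hy
    exact hz.2.trans_le (hφmono hzy.le)
  have ht : Tendsto φ (nhdsWithin a (Ioi a)) (nhds (φ a)) :=
    (hφrc a).mono Ioi_subset_Ici_self
  exact ge_of_tendsto ht (eventually_nhdsWithin_of_forall fun y hy => (h y hy).le)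

/-- The core one-sided estimate. -/
lemma rcInv_core (φ ψ : ℝ → ℝ) (K : ℝ) (hK : 0 < K)
    (hφmono : Monotone φ) (hφnn : ∀ x, 0 ≤ φ x)
    (hφrc : ∀ x, ContinuousWithinAt φ (Ici x) x) (hφlim : Tendsto φ atTop atTop)
    (hψmono : Monotone ψ)
    (hψrc : ∀ x, ContinuousWithinAt ψ (Ici x) x) (hψlim : Tendsto ψ atTop atTop)
    (ε ε' : ℝ) (hε : 0 < ε) (hεε' : ε < ε')
    (hyp : ∀ z ∈ Icc (0:ℝ) (max (rcInv φ K) (rcInv ψ K)),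
        min (ψ (z - ε)) K - ε < min (φ z) K)
    (x : ℝ) (hx0 : 0 ≤ x) (hxK : x ≤ K) :
    rcInv φ (x - ε') - ε' < rcInv ψ x := by
  set L := max (rcInv φ K) (rcInv ψ K) with hL
  set b := rcInv ψ x with hb
  have hb0 : 0 ≤ b := rcInv_nonneg ψ hψlim x
  rw [sub_lt_iff_lt_add]
  by_cases hxe : x < ε'
  · have h0 : rcInv φ (x - ε') ≤ 0 :=
      rcInv_le φ le_rfl (by linarith [hφnn 0])
    linarith
  · by_cases hbL : b + ε ≤ L
    · have hz : b + ε ∈ Icc (0:ℝ) L := ⟨by linarith, hbL⟩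
      have h1 := hyp (b + ε) hz
      rw [add_sub_cancel_right] at h1
      have hψb : x ≤ ψ b := le_apply_rcInv ψ hψmono hψrc hψlim x
      have hxmin : x ≤ min (ψ b) K := le_min hψb hxK
      have hφbe : x - ε < φ (b + ε) := by
        have := min_le_left (φ (b + ε)) K
        linarith
      have h2 : rcInv φ (x - ε') ≤ b + ε :=
        rcInv_le φ (by linarith) (by linarith)
      linarith
    · have h1 : rcInv φ (x - ε') ≤ rcInv φ K :=
        rcInv_mono φ hφlim (by linarith)
      have h2 : rcInv φ K ≤ L := le_max_left _ _
      linarith [not_le.1 hbL]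

/-- Proposition 5.5: for `φ, ψ ∈ 𝒯` diverging at infinity and `K > 0`, with
`L := max{φ⁻¹(K), ψ⁻¹(K)}` and `f_K := min{f, K}` the truncation at level `K`,
one has `ρ_K(φ⁻¹, ψ⁻¹) ≤ ρ_L(φ_K, ψ_K)`. -/
theorem rho_rcInv_le (φ ψ : ℝ → ℝ) (K : ℝ) (hK : 0 < K)
    (hφmono : Monotone φ) (hφnn : ∀ x, 0 ≤ φ x) (hφzero : ∀ x < (0:ℝ), φ x = 0)
    (hφrc : ∀ x, ContinuousWithinAt φ (Ici x) x)
    (hφlim : Tendsto φ atTop atTop)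
    (hψmono : Monotone ψ) (hψnn : ∀ x, 0 ≤ ψ x) (hψzero : ∀ x < (0:ℝ), ψ x = 0)
    (hψrc : ∀ x, ContinuousWithinAt ψ (Ici x) x)
    (hψlim : Tendsto ψ atTop atTop) :
    rho K (rcInv φ) (rcInv ψ)
      ≤ rho (max (rcInv φ K) (rcInv ψ K))
          (fun x => min (φ x) K) (fun x => min (ψ x) K) := by
  set L := max (rcInv φ K) (rcInv ψ K) with hLdef
  have hL0 : 0 ≤ L := le_trans (rcInv_nonneg φ hφlim K) (le_max_left _ _)
  set A := {ε : ℝ | 0 < ε ∧ ∀ x ∈ Icc (0:ℝ) K,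
      rcInv φ (x - ε) - ε < rcInv ψ x ∧ rcInv ψ (x - ε) - ε < rcInv φ x} with hA
  set B := {ε : ℝ | 0 < ε ∧ ∀ x ∈ Icc (0:ℝ) L,
      min (φ (x - ε)) K - ε < min (ψ x) K ∧ min (ψ (x - ε)) K - ε < min (φ x) K} with hB
  have hrho1 : rho K (rcInv φ) (rcInv ψ) = sInf A := rfl
  have hrho2 : rho L (fun x => min (φ x) K) (fun x => min (ψ x) K) = sInf B := rfl
  rw [hrho1, hrho2]
  have hAbdd : BddBelow A := ⟨0, fun e he => he.1.le⟩
  have hBne : B.Nonempty := by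
    refine ⟨L + K + 1, by linarith, fun z hz => ?_⟩
    have hz1 : z - (L + K + 1) < 0 := by
      have := hz.2
      linarith
    have hφz : φ (z - (L + K + 1)) = 0 := hφzero _ hz1
    have hψz : ψ (z - (L + K + 1)) = 0 := hψzero _ hz1
    constructor
    · rw [hφz, min_eq_left hK.le]
      have := le_min (hψnn z) hK.le
      linarith
    · rw [hψz, min_eq_left hK.le]
      have := le_min (hφnn z) hK.le
      linarith
  refine le_csInf hBne fun ε hε => ?_
  refine le_of_forall_gt_imp_ge_of_dense fun ε' hε' => ?_
  have hεA : ε' ∈ A := by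
    refine ⟨hε.1.trans hε', fun x hx => ?_⟩
    constructor
    · exact rcInv_core φ ψ K hK hφmono hφnn hφrc hφlim hψmono hψrc hψlim ε ε' hε.1 hε'
        (fun z hz => (hε.2 z hz).2) x hx.1 hx.2
    · refine rcInv_core ψ φ K hK hψmono hψnn hψrc hψlim hφmono hφrc hφlim ε ε' hε.1 hε'
        (fun z hz => ?_) x hx.1 hx.2
      rw [max_comm] at hz
      exact (hε.2 z hz).1
  exact csInf_le hAbdd hεA
end

section
/- Let φ, ψ ∈ 𝒯 with lim_{x→∞} φ(x) = lim_{x→∞} ψ(x) = +∞. If R(ψ) ∩ D(φ) = ∅, then for every x ≥ 0 one has (φ ∘ ψ)⁻¹(x) = ψ⁻¹(φ⁻¹(x)). (This is the key pathwise identity behind the flow property of the dual stochastic flow in Proposition 2.2.) -/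
open Set Filter

/-- `D(φ)`: the set of jump points of `φ` on `[0,∞)` (with `φ(0−) := 0`, which holds
automatically under the convention that `φ` vanishes on the negative half-line). -/
noncomputable def Dset (φ : ℝ → ℝ) : Set ℝ :=
  {x : ℝ | 0 ≤ x ∧ Function.leftLim φ x ≠ φ x}

/-- `R(φ) = {φ(y) : y ≥ 0 and there exists z > y with φ(y) = φ(z)}`. -/
def Rset (φ : ℝ → ℝ) : Set ℝ :=
  {v : ℝ | ∃ y : ℝ, 0 ≤ y ∧ ∃ z : ℝ, y < z ∧ φ y = φ z ∧ v = φ y}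

/-- The key pathwise identity behind Proposition 2.2: if `φ, ψ ∈ 𝒯` diverge at
infinity and `R(ψ) ∩ D(φ) = ∅`, then `(φ ∘ ψ)⁻¹(x) = ψ⁻¹(φ⁻¹(x))` for all `x ≥ 0`. -/
theorem rcInv_comp_of_range_jump_disjoint (φ ψ : ℝ → ℝ)
    (hφmono : Monotone φ) (hφnn : ∀ x, 0 ≤ φ x) (hφzero : ∀ x < (0:ℝ), φ x = 0)
    (hφrc : ∀ x, ContinuousWithinAt φ (Ici x) x)
    (hφlim : Tendsto φ atTop atTop)
    (hψmono : Monotone ψ) (hψnn : ∀ x, 0 ≤ ψ x) (hψzero : ∀ x < (0:ℝ), ψ x = 0)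
    (hψrc : ∀ x, ContinuousWithinAt ψ (Ici x) x)
    (hψlim : Tendsto ψ atTop atTop)
    (hRD : Rset ψ ∩ Dset φ = ∅) :
    ∀ x ≥ (0:ℝ), rcInv (φ ∘ ψ) x = rcInv ψ (rcInv φ x) := by
  intro x hx
  have hSne : {y : ℝ | 0 ≤ y ∧ x < φ y}.Nonempty := by
    obtain ⟨y, hy1, hy2⟩ :=
      ((hφlim.eventually (eventually_gt_atTop x)).and (eventually_ge_atTop 0)).exists
    exact ⟨y, hy2, hy1⟩
  have hSbdd : BddBelow {y : ℝ | 0 ≤ y ∧ x < φ y} := ⟨0, fun y hy => hy.1⟩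
  set a := rcInv φ x with ha
  have hanonneg : 0 ≤ a := le_csInf hSne fun y hy => hy.1
  have h_a_le : ∀ t, 0 ≤ t → x < φ t → a ≤ t := fun t ht h => csInf_le hSbdd ⟨ht, h⟩
  have h_below : ∀ t < a, φ t ≤ x := by
    intro t ht
    rcases lt_or_ge t 0 with h0 | h0
    · rw [hφzero t h0]; exact hx
    · by_contra h
      exact absurd (h_a_le t h0 (lt_of_not_ge h)) (not_le.mpr ht)
  -- Sets for the two sides
  have hBne : {y : ℝ | 0 ≤ y ∧ a < ψ y}.Nonempty := by
    obtain ⟨y, hy1, hy2⟩ :=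
      ((hψlim.eventually (eventually_gt_atTop a)).and (eventually_ge_atTop 0)).exists
    exact ⟨y, hy2, hy1⟩
  have hBbdd : BddBelow {y : ℝ | 0 ≤ y ∧ a < ψ y} := ⟨0, fun y hy => hy.1⟩
  have hAne : {y : ℝ | 0 ≤ y ∧ x < (φ ∘ ψ) y}.Nonempty := by
    obtain ⟨y, hy1, hy2⟩ :=
      (((hφlim.comp hψlim).eventually (eventually_gt_atTop x)).and
        (eventually_ge_atTop 0)).exists
    exact ⟨y, hy2, hy1⟩
  have hAbdd : BddBelow {y : ℝ | 0 ≤ y ∧ x < (φ ∘ ψ) y} := ⟨0, fun y hy => hy.1⟩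
  have hBsubA : {y : ℝ | 0 ≤ y ∧ a < ψ y} ⊆ {y : ℝ | 0 ≤ y ∧ x < (φ ∘ ψ) y} := by
    rintro y ⟨hy0, hy⟩
    obtain ⟨t, ⟨ht0, htx⟩, htlt⟩ := exists_lt_of_csInf_lt hSne hy
    exact ⟨hy0, lt_of_lt_of_le htx (hφmono htlt.le)⟩
  refine le_antisymm (csInf_le_csInf hAbdd hBne hBsubA) ?_
  refine le_csInf hAne ?_
  rintro y ⟨hy0, hy⟩
  have haley : a ≤ ψ y := h_a_le _ (hψnn y) hy
  rcases lt_or_eq_of_le haley with hlt | heq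
  · exact csInf_le hBbdd ⟨hy0, hlt⟩
  · -- a = ψ y
    by_contra hcon
    push_neg at hcon
    -- first: ψ strictly increases right of y, else contradiction with hRD
    have hstrict : ∀ z, y < z → ψ y < ψ z := by
      intro z hz
      rcases (hψmono hz.le).lt_or_eq with h | h
      · exact h
      · exfalso
        have hmemR : ψ y ∈ Rset ψ := ⟨y, hy0, z, hz, h, rfl⟩
        have hjump : Function.leftLim φ a ≤ x := by
          have htend := hφmono.tendsto_leftLim a
          refine le_of_tendsto htend ?_
          exact Filter.eventually_of_mem self_mem_nhdsWithin fun t ht => h_below t ht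
        have hφa : x < φ a := by rw [heq]; exact hy
        have hmemD : a ∈ Dset φ := ⟨hanonneg, ne_of_lt (lt_of_le_of_lt hjump hφa)⟩
        rw [← heq] at hmemR
        have : a ∈ Rset ψ ∩ Dset φ := ⟨hmemR, hmemD⟩
        rw [hRD] at this
        exact this
    obtain ⟨z, hz1, hz2⟩ := exists_between hcon
    have : sInf {y : ℝ | 0 ≤ y ∧ a < ψ y} ≤ z := by
      refine csInf_le hBbdd ⟨le_trans hy0 hz1.le, ?_⟩
      rw [heq]; exact hstrict z hz1
    exact absurd (lt_of_le_of_lt this hz2) (lt_irrefl _)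
end

section
/- Let ψ ∈ 𝒯 with lim_{x→∞} ψ(x) = +∞ and let K > 0. Then ρ_K(id, ψ⁻¹) ≤ 4 · ρ_K(id, ψ), where id denotes the identity function on [0,∞). (This estimate, established in the proof of Proposition 2.2, yields the stochastic continuity of the dual flow. More precisely one has ρ_K(id, ψ⁻¹) ≤ 2 sup_{0≤x≤m} |x − ψ(x)| with m := min{K, ψ⁻¹(K)}, and sup_{0≤x≤K} |x − ψ(x)| ≤ 2 ρ_K(id, ψ).) -/
open Set Filter

/-- The estimate from the proof of Proposition 2.2 (stochastic continuity of the
dual flow): for `ψ ∈ 𝒯` diverging at infinity and `K > 0`,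
`ρ_K(id, ψ⁻¹) ≤ 4 ρ_K(id, ψ)`, where `id` is the identity on `[0,∞)` (extended
by `0` on the negative half-line, in accordance with the convention for `𝒯`). -/
theorem rho_id_rcInv_le (ψ : ℝ → ℝ) (K : ℝ) (hK : 0 < K)
    (hψmono : Monotone ψ) (hψnn : ∀ x, 0 ≤ ψ x) (hψzero : ∀ x < (0:ℝ), ψ x = 0)
    (hψrc : ∀ x, ContinuousWithinAt ψ (Ici x) x)
    (hψlim : Tendsto ψ atTop atTop) :
    rho K (fun x => max x 0) (rcInv ψ) ≤ 4 * rho K (fun x => max x 0) ψ := by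
  have hSetNe : ∀ x : ℝ, {y : ℝ | 0 ≤ y ∧ x < ψ y}.Nonempty := by
    intro x
    obtain ⟨N, hN⟩ := Filter.eventually_atTop.mp (hψlim.eventually_gt_atTop x)
    exact ⟨max N 0, le_max_right _ _, hN _ (le_max_left _ _)⟩
  have hbdd : ∀ x : ℝ, BddBelow {y : ℝ | 0 ≤ y ∧ x < ψ y} :=
    fun x => ⟨0, fun y hy => hy.1⟩
  have hInvNonneg : ∀ x, 0 ≤ rcInv ψ x :=
    fun x => le_csInf (hSetNe x) (fun y hy => hy.1)
  have hInvLe : ∀ x t : ℝ, 0 ≤ t → x < ψ t → rcInv ψ x ≤ t :=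
    fun x t h1 h2 => csInf_le (hbdd x) ⟨h1, h2⟩
  set Sψ := {ε : ℝ | 0 < ε ∧ ∀ x ∈ Icc (0:ℝ) K,
      max (x - ε) 0 - ε < ψ x ∧ ψ (x - ε) - ε < max x 0} with hSψ
  set SI := {ε : ℝ | 0 < ε ∧ ∀ x ∈ Icc (0:ℝ) K,
      max (x - ε) 0 - ε < rcInv ψ x ∧ rcInv ψ (x - ε) - ε < max x 0} with hSI
  have hrho1 : rho K (fun x => max x 0) ψ = sInf Sψ := rfl
  have hrhoI : rho K (fun x => max x 0) (rcInv ψ) = sInf SI := rfl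
  have hSIbdd : BddBelow SI := ⟨0, fun ε hε => le_of_lt hε.1⟩
  have hSψne : Sψ.Nonempty := by
    refine ⟨K + 1, by linarith, fun x hx => ?_⟩
    obtain ⟨hx0, hxK⟩ := hx
    have h1 : x - (K + 1) < 0 := by linarith
    have h2 : max (x - (K + 1)) 0 = 0 := max_eq_right (le_of_lt h1)
    have h3 : ψ (x - (K + 1)) = 0 := hψzero _ h1
    have h4 := hψnn x
    have h5 : (0:ℝ) ≤ max x 0 := le_max_right _ _
    constructor
    · rw [h2]; linarith
    · rw [h3]; linarith
  -- key step : ε admissible for ψ implies 4ε admissible for rcInv ψ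
  have key : ∀ ε ∈ Sψ, 4 * ε ∈ SI := by
    rintro ε ⟨hε, hεh⟩
    refine ⟨by linarith, fun x hx => ?_⟩
    obtain ⟨hx0, hxK⟩ := hx
    have hψx : x - 2 * ε < ψ x := by
      have h := (hεh x ⟨hx0, hxK⟩).1
      have h' : x - ε ≤ max (x - ε) 0 := le_max_left _ _
      linarith
    constructor
    · by_cases hc : x - 4 * ε ≤ 0
      · rw [max_eq_right hc]
        have := hInvNonneg x
        linarith
      · push_neg at hc
        rw [max_eq_left (le_of_lt hc)]
        by_contra hcon
        push_neg at hcon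
        -- hcon : rcInv ψ x ≤ x - 4*ε - 4*ε
        have hlt : sInf {y : ℝ | 0 ≤ y ∧ x < ψ y} < x - 7 * ε := by
          have : rcInv ψ x ≤ x - 8 * ε := by
            unfold rcInv; unfold rcInv at hcon; linarith
          calc sInf {y : ℝ | 0 ≤ y ∧ x < ψ y} ≤ x - 8 * ε := this
            _ < x - 7 * ε := by linarith
        obtain ⟨y, ⟨hy0, hyψ⟩, hylt⟩ := exists_lt_of_csInf_lt (hSetNe x) hlt
        have hyK : y + ε ∈ Icc (0:ℝ) K := ⟨by linarith, by linarith⟩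
        have h2 := (hεh (y + ε) hyK).2
        rw [show y + ε - ε = y by ring] at h2
        have h3 : max (y + ε) 0 = y + ε := max_eq_left (by linarith)
        rw [h3] at h2
        -- ψ y < y + 2ε ≤ x - 5ε < x, contradicting x < ψ y
        linarith
    · have hle : rcInv ψ (x - 4 * ε) ≤ x := hInvLe _ _ hx0 (by linarith)
      have h5 : x ≤ max x 0 := le_max_left _ _
      linarith
  have step : ∀ ε ∈ Sψ, sInf SI ≤ 4 * ε := fun ε hε => csInf_le hSIbdd (key ε hε)
  have final : sInf SI / 4 ≤ sInf Sψ :=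
    le_csInf hSψne (fun ε hε => by have := step ε hε; linarith)
  rw [hrhoI, hrho1]
  linarith
end

section
/- (Monotonicity of the Euler–Maruyama step.) Let σ, b : (0,∞) → ℝ be continuously differentiable with σ(x) > 0 and σ′(x) ≥ 0 for all x > 0, let t > 0, and assume that for every x > 0 one has x·σ′(x)/σ(x) + ( b(x)·σ′(x)/σ(x) − b′(x) )·t ≤ 1 (this is the paper's condition x(log|σ|)′(x) + b(x)[(log|σ|)′(x) − (log|b|)′(x)]·Δt ≤ 1). Then for every a ∈ ℝ the map x ↦ max{0, x + σ(x)·a + b(x)·t} is nondecreasing on (0,∞). (Applied with a the Wiener increment Δw, this shows the one-step Euler–Maruyama map of the absorbing flow is almost surely nondecreasing.) -/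
open Set Filter

/-- Monotonicity of the one-step Euler–Maruyama map (Proposition 3.4): if
`σ, b : (0,∞) → ℝ` are continuously differentiable with `σ > 0` and `σ′ ≥ 0`
on `(0,∞)`, `t > 0`, and for all `x > 0`
`x σ′(x)/σ(x) + (b(x) σ′(x)/σ(x) − b′(x)) t ≤ 1`,
then for every noise value `a ∈ ℝ` the map `x ↦ max{0, x + σ(x) a + b(x) t}`
is nondecreasing on `(0,∞)`. -/
theorem eulerMaruyama_step_monotone (σ b σ' b' : ℝ → ℝ) (t : ℝ) (ht : 0 < t) (a : ℝ)
    (hσderiv : ∀ x ∈ Ioi (0:ℝ), HasDerivAt σ (σ' x) x)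
    (hbderiv : ∀ x ∈ Ioi (0:ℝ), HasDerivAt b (b' x) x)
    (hσ'cont : ContinuousOn σ' (Ioi 0))
    (hb'cont : ContinuousOn b' (Ioi 0))
    (hσpos : ∀ x ∈ Ioi (0:ℝ), 0 < σ x)
    (hσ'nonneg : ∀ x ∈ Ioi (0:ℝ), 0 ≤ σ' x)
    (hcond : ∀ x ∈ Ioi (0:ℝ),
      x * σ' x / σ x + (b x * σ' x / σ x - b' x) * t ≤ 1) :
    MonotoneOn (fun x => max 0 (x + σ x * a + b x * t)) (Ioi 0) := by
  set f : ℝ → ℝ := fun x => x + σ x * a + b x * t with hf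
  -- derivative of f
  have hfderiv : ∀ z ∈ Ioi (0:ℝ), HasDerivAt f (1 + σ' z * a + b' z * t) z := by
    intro z hz
    exact ((hasDerivAt_id z).add ((hσderiv z hz).mul_const a)).add
      ((hbderiv z hz).mul_const t)
  -- the derivative is nonnegative wherever f is positive
  have hkey : ∀ z ∈ Ioi (0:ℝ), 0 < f z → 0 ≤ 1 + σ' z * a + b' z * t := by
    intro z hz hfz
    have hs : 0 < σ z := hσpos z hz
    have hs' : 0 ≤ σ' z := hσ'nonneg z hz
    have hc := hcond z hz
    have h1 : z * σ' z + (b z * σ' z - b' z * σ z) * t ≤ σ z := by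
      have h := mul_le_mul_of_nonneg_right hc hs.le
      field_simp at h
      nlinarith [h]
    -- from f z > 0 : σ z * a > -(z + b z * t), multiply by σ' z ≥ 0
    have h2 : σ' z * (σ z * a) ≥ σ' z * (-(z + b z * t)) := by
      apply mul_le_mul_of_nonneg_left _ hs'
      have : 0 < z + σ z * a + b z * t := hfz
      linarith
    nlinarith [mul_pos hs hs]
  -- monotonicity of f on intervals where f stays positive in the interior
  have hmono : ∀ u v : ℝ, 0 < u → u ≤ v → (∀ w ∈ Ioo u v, 0 < f w) → f u ≤ f v := by
    intro u v hu huv hpos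
    have hsub : Icc u v ⊆ Ioi 0 := fun w hw => lt_of_lt_of_le hu hw.1
    have hcont : ContinuousOn f (Icc u v) := fun w hw =>
      ((hfderiv w (hsub hw)).continuousAt).continuousWithinAt
    have hint : interior (Icc u v) = Ioo u v := interior_Icc
    have := monotoneOn_of_deriv_nonneg (convex_Icc u v) hcont
      (fun w hw => by
        rw [hint] at hw
        exact (hfderiv w (hsub (Ioo_subset_Icc_self hw))).differentiableAt.differentiableWithinAt)
      (fun w hw => by
        rw [hint] at hw
        have hw' : w ∈ Ioi (0:ℝ) := hsub (Ioo_subset_Icc_self hw)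
        rw [(hfderiv w hw').deriv]
        exact hkey w hw' (hpos w hw))
    exact this (left_mem_Icc.mpr huv) (right_mem_Icc.mpr huv) huv
  -- conclude
  intro x hx y hy hxy
  simp only
  rcases le_or_gt (f x) 0 with hfx | hfx
  · rw [max_eq_left hfx]
    exact le_max_left _ _
  · -- f is positive on all of Icc x y
    have hposIcc : ∀ w ∈ Icc x y, 0 < f w := by
      by_contra h
      push_neg at h
      obtain ⟨c, hc, hfc⟩ := h
      set K : Set ℝ := {w ∈ Icc x y | f w ≤ 0} with hK
      have hKne : K.Nonempty := ⟨c, hc, hfc⟩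
      have hKbdd : BddBelow K := ⟨x, fun w hw => hw.1.1⟩
      set c0 := sInf K with hc0
      have hc0cl : c0 ∈ closure K := csInf_mem_closure hKne hKbdd
      have hc0Icc : c0 ∈ Icc x y :=
        ⟨le_csInf hKne (fun w hw => hw.1.1),
         le_trans (csInf_le hKbdd ⟨hc, hfc⟩) hc.2⟩
      have hc0pos : (0:ℝ) < c0 := lt_of_lt_of_le hx hc0Icc.1
      have hfc0 : f c0 ≤ 0 := by
        have hnb : (nhdsWithin c0 K).NeBot := mem_closure_iff_nhdsWithin_neBot.mp hc0cl
        have htend : Tendsto f (nhdsWithin c0 K) (nhds (f c0)) :=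
          ((hfderiv c0 hc0pos).continuousAt.continuousWithinAt : ContinuousWithinAt f K c0)
        exact le_of_tendsto htend (eventually_mem_nhdsWithin.mono (fun w hw => hw.2))
      have hxc0 : x < c0 := by
        rcases lt_or_eq_of_le hc0Icc.1 with h | h
        · exact h
        · exact absurd hfc0 (by rw [← h]; linarith)
      have hposIoo : ∀ w ∈ Ioo x c0, 0 < f w := by
        intro w hw
        by_contra hle
        push_neg at hle
        have hwK : w ∈ K := ⟨⟨hw.1.le, le_trans hw.2.le hc0Icc.2⟩, hle⟩
        exact absurd (csInf_le hKbdd hwK) (not_le.mpr hw.2)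
      have := hmono x c0 hx hc0Icc.1 hposIoo
      linarith
    have hfxy := hmono x y hx hxy (fun w hw => hposIcc w (Ioo_subset_Icc_self hw))
    calc max 0 (f x) = f x := max_eq_right hfx.le
    _ ≤ f y := hfxy
    _ ≤ max 0 (f y) := le_max_right _ _
end

section
/- Let φ, ψ ∈ 𝒯 with lim_{x→∞} φ(x) = lim_{x→∞} ψ(x) = +∞, and let z ≥ 0. If φ is left-continuous at the point φ⁻¹(z), then (φ ∘ ψ)⁻¹(z) = ψ⁻¹( φ⁻¹(z) ). -/
open Set Filter

/-- Proposition A.1 (iv): for `φ, ψ ∈ 𝒯` diverging at infinity and `z ≥ 0`,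
if `φ` is left-continuous at the point `φ⁻¹(z)`, then
`(φ ∘ ψ)⁻¹(z) = ψ⁻¹(φ⁻¹(z))`. -/
theorem rcInv_comp_eq (φ ψ : ℝ → ℝ)
    (hφmono : Monotone φ) (hφnn : ∀ x, 0 ≤ φ x) (hφzero : ∀ x < (0:ℝ), φ x = 0)
    (hφrc : ∀ x, ContinuousWithinAt φ (Ici x) x)
    (hφlim : Tendsto φ atTop atTop)
    (hψmono : Monotone ψ) (hψnn : ∀ x, 0 ≤ ψ x) (hψzero : ∀ x < (0:ℝ), ψ x = 0)
    (hψrc : ∀ x, ContinuousWithinAt ψ (Ici x) x)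
    (hψlim : Tendsto ψ atTop atTop)
    (z : ℝ) (hz : 0 ≤ z)
    (hlc : ContinuousWithinAt φ (Iic (rcInv φ z)) (rcInv φ z)) :
    rcInv (φ ∘ ψ) z = rcInv ψ (rcInv φ z) := by
  set a := rcInv φ z with ha
  have hSne : {y : ℝ | 0 ≤ y ∧ z < φ y}.Nonempty := by
    obtain ⟨N, hN⟩ := (hφlim.eventually_gt_atTop z).exists_forall_of_atTop
    exact ⟨max N 0, le_max_right _ _, hN _ (le_max_left _ _)⟩
  have hSbdd : BddBelow {y : ℝ | 0 ≤ y ∧ z < φ y} := ⟨0, fun y hy => hy.1⟩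
  have hφa : φ a ≤ z := by
    have h1 : ∀ y ∈ Iio a, φ y ≤ z := by
      intro y hy
      rcases lt_or_ge y 0 with h | h
      · rw [hφzero y h]; exact hz
      · by_contra hcon
        exact notMem_of_lt_csInf hy hSbdd ⟨h, lt_of_not_ge hcon⟩
    exact le_of_tendsto ((hlc.mono Iio_subset_Iic_self).tendsto)
      (eventually_nhdsWithin_of_forall h1)
  have key : ∀ x : ℝ, z < φ x ↔ a < x := by
    intro x
    constructor
    · intro hx
      by_contra hcon
      exact not_le_of_gt hx (le_trans (hφmono (le_of_not_gt hcon)) hφa)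
    · intro hx
      obtain ⟨y, hy, hyx⟩ := exists_lt_of_csInf_lt hSne hx
      exact lt_of_lt_of_le hy.2 (hφmono hyx.le)
  have hset : {y : ℝ | 0 ≤ y ∧ z < (φ ∘ ψ) y} = {y : ℝ | 0 ≤ y ∧ a < ψ y} := by
    ext y
    simp only [mem_setOf_eq, Function.comp]
    exact and_congr_right fun _ => key _
  rw [rcInv, hset]; rfl
end
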